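/- Any maximizer of the augmented objective z_e(x) = z_1(x) + g(x), where z_1 is integer-valued and g(x) ∈ [0,1) is a strictly increasing function of the vector (z_2(x),...,z_{n_z}(x)) in the componentwise order, is a Pareto non-dominated solution with respect to the objectives (z_1, z_2, ..., z_{n_z}). -/
import Mathlib

/-- A maximizer of the augmented objective z₁ + g, where g is strictly increasing in the
remaining objectives, is Pareto non-dominated with respect to (z₁, z₂, …, z_{n_z}). -/
theorem augmented_maximizer_nondominated {X : Type*} [Nonempty X] {ι : Type*}
    (z1 : X → ℤ) (z : ι → X → ℝ) (g : X → ℝ)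
    (hg0 : ∀ x, 0 ≤ g x) (hg1 : ∀ x, g x < 1)
    (hmono : ∀ x y : X, (∀ i, z i y ≤ z i x) → (∃ i, z i y < z i x) → g y < g x)
    (hcong : ∀ x y : X, (∀ i, z i x = z i y) → g x = g y)
    (xstar : X)
    (hmax : ∀ x, (z1 x : ℝ) + g x ≤ (z1 xstar : ℝ) + g xstar) :
    ¬ ∃ y : X, (z1 xstar ≤ z1 y ∧ ∀ i, z i xstar ≤ z i y) ∧
      (z1 xstar < z1 y ∨ ∃ i, z i xstar < z i y) := by
  rintro ⟨y, ⟨h1, h2⟩, hstrict⟩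
  have hmy := hmax y
  rcases hstrict with h | h
  · have : (z1 xstar : ℝ) + 1 ≤ (z1 y : ℝ) := by exact_mod_cast h
    have := hg0 y
    have := hg1 xstar
    linarith
  · have hg : g xstar < g y := hmono y xstar h2 h
    have : (z1 xstar : ℝ) ≤ (z1 y : ℝ) := by exact_mod_cast h1
    linarith
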